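/- Let J = (J_1,…,J_g) ∈ M_d(ℂ)^g be linearly independent with the span of J_1,…,J_g closed under multiplication, let Ξ ∈ M_g(ℂ)^g be the unique tuple with J_k J_j = Σ_{s=1}^g (Ξ_j)_{k,s} J_s, and assume in addition that D_J(n) is a bounded subset of M_n(ℂ)^g for every n. Then for every n the convexotonic map q(X) = X(I+Λ_Ξ(X))^{-1} is a well-defined bijection from D_J(n) onto B_J(n), with inverse p(Y) = Y(I−Λ_Ξ(Y))^{-1}: for every X ∈ D_J(n), I + Λ_Ξ(X) is invertible and q(X) ∈ B_J(n); for every Y ∈ B_J(n), I − Λ_Ξ(Y) is invertible and p(Y) ∈ D_J(n); and p(q(X)) = X, q(p(Y)) = Y. -/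

import Mathlib

open scoped Kronecker Matrix Matrix.Norms.L2Operator ComplexOrder

noncomputable section

/-- `Λ_A(X) = Σⱼ Aⱼ ⊗ Xⱼ` (Kronecker product), a `dn × dn` matrix. -/
def lamK {g d n : ℕ} (A : Fin g → Matrix (Fin d) (Fin d) ℂ)
    (X : Fin g → Matrix (Fin n) (Fin n) ℂ) :
    Matrix (Fin d × Fin n) (Fin d × Fin n) ℂ :=
  ∑ j, (A j) ⊗ₖ (X j)

/-- `L_A(X) = I + Λ_A(X) + Λ_A(X)^*`. -/
def Lpen {g d n : ℕ} (A : Fin g → Matrix (Fin d) (Fin d) ℂ)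
    (X : Fin g → Matrix (Fin n) (Fin n) ℂ) :
    Matrix (Fin d × Fin n) (Fin d × Fin n) ℂ :=
  1 + lamK A X + (lamK A X)ᴴ

/-- The `n × n` block of a `gn × gn` matrix in position `(j, i)`. -/
def blk {g n : ℕ} (M : Matrix (Fin g × Fin n) (Fin g × Fin n) ℂ) (j i : Fin g) :
    Matrix (Fin n) (Fin n) ℂ :=
  fun a b => M (j, a) (i, b)

/-- The convexotonic map `p(X) = X (I - Λ_Ξ(X))⁻¹`, given blockwise by
`p(X)ᵢ = Σⱼ Xⱼ [(I - Λ_Ξ(X))⁻¹]_{j,i}`. -/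
def pmap {g n : ℕ} (Ξ : Fin g → Matrix (Fin g) (Fin g) ℂ)
    (X : Fin g → Matrix (Fin n) (Fin n) ℂ) : Fin g → Matrix (Fin n) (Fin n) ℂ :=
  fun i => ∑ j, X j * blk ((1 - lamK Ξ X)⁻¹) j i

/-- The convexotonic map `q(X) = X (I + Λ_Ξ(X))⁻¹`, given blockwise by
`q(X)ᵢ = Σⱼ Xⱼ [(I + Λ_Ξ(X))⁻¹]_{j,i}`. -/
def qmap {g n : ℕ} (Ξ : Fin g → Matrix (Fin g) (Fin g) ℂ)
    (X : Fin g → Matrix (Fin n) (Fin n) ℂ) : Fin g → Matrix (Fin n) (Fin n) ℂ :=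
  fun i => ∑ j, X j * blk ((1 + lamK Ξ X)⁻¹) j i

/-- A tuple `Ξ` of `g × g` matrices is convexotonic if
`Ξ_k Ξ_j = Σ_s (Ξ_j)_{k,s} Ξ_s` for all `j, k`. -/
def Convexotonic {g : ℕ} (Ξ : Fin g → Matrix (Fin g) (Fin g) ℂ) : Prop :=
  ∀ j k, Ξ k * Ξ j = ∑ s, (Ξ j) k s • Ξ s

/-- `Λ_A(α) = Σⱼ αⱼ Aⱼ` for a scalar point `α ∈ ℂ^g`. -/
def lamScalar {g d : ℕ} (A : Fin g → Matrix (Fin d) (Fin d) ℂ) (α : Fin g → ℂ) :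
    Matrix (Fin d) (Fin d) ℂ :=
  ∑ j, α j • A j

/-- A hyperbasis of `ℂ^d`: `d+1` vectors, each `d` of which form a basis. -/
def Hyperbasis {d : ℕ} (u : Fin (d + 1) → (Fin d → ℂ)) : Prop :=
  ∀ i : Fin (d + 1),
    LinearIndependent ℂ (fun j : {j : Fin (d + 1) // j ≠ i} => u j) ∧
    Submodule.span ℂ (Set.range fun j : {j : Fin (d + 1) // j ≠ i} => u j) = ⊤

/-- The tuple `A ∈ M_d(ℂ)^g` is sv-generic. -/
def SvGeneric {g d : ℕ} (A : Fin g → Matrix (Fin d) (Fin d) ℂ) : Prop :=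
  (∃ (α : Fin (d + 1) → (Fin g → ℂ)) (u : Fin (d + 1) → (Fin d → ℂ)),
    (∀ j, (1 - (lamScalar A (α j))ᴴ * lamScalar A (α j)).PosSemidef ∧
      u j ≠ 0 ∧
      LinearMap.ker (Matrix.mulVecLin (1 - (lamScalar A (α j))ᴴ * lamScalar A (α j)))
        = Submodule.span ℂ {u j}) ∧
    Hyperbasis u) ∧
  (∃ (β : Fin d → (Fin g → ℂ)) (v : Fin d → (Fin d → ℂ)),
    (∀ k, (1 - lamScalar A (β k) * (lamScalar A (β k))ᴴ).PosSemidef ∧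
      v k ≠ 0 ∧
      LinearMap.ker (Matrix.mulVecLin (1 - lamScalar A (β k) * (lamScalar A (β k))ᴴ))
        = Submodule.span ℂ {v k}) ∧
    LinearIndependent ℂ v ∧ Submodule.span ℂ (Set.range v) = ⊤)

/-- Evaluation of a `k × l` matrix of noncommutative polynomials at a tuple of
`n × n` matrices, yielding a `kn × ln` matrix. -/
def polyEval {k l g n : ℕ} (Q : Matrix (Fin k) (Fin l) (FreeAlgebra ℂ (Fin g)))
    (X : Fin g → Matrix (Fin n) (Fin n) ℂ) :
    Matrix (Fin k × Fin n) (Fin l × Fin n) ℂ :=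
  fun a b => (FreeAlgebra.lift ℂ X) (Q a.1 b.1) a.2 b.2


/-!
The structure constants make `Λ_J` multiplicative on tuples, `Λ_J(X) Λ_J(Y) = Λ_J(X Λ_Ξ(Y))`,
and by linear independence of `J` the tuple `Ξ` obeys the same relations (it is convexotonic).
Applying `Λ_J` to `q(X) (I + Λ_Ξ(X)) = X` gives `Λ_J(q(X)) = Λ_J(X) (I + Λ_J(X))⁻¹`, a Cayley
transform, which is a contraction exactly when `I + Λ_J(X) + Λ_J(X)^*` is positive semidefinite;
`p` is the inverse transform. The same identity for `Ξ` reads `(I - Λ_Ξ(q(X))) (I + Λ_Ξ(X)) = I`,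
whence `p ∘ q = id`, and `q ∘ p = id` follows since `p(Y) = -q(-Y)`. Invertibility passes from
`I ± Λ_J` to `I ± Λ_Ξ` by a null-vector argument. The one analytic point is that `I - Λ_J(Y)` is
invertible on the closed unit ball `B_J`; this is where boundedness of `D_J` enters.
-/

section CayleyTransform

variable {ι : Type*} [Fintype ι] [DecidableEq ι]

open scoped MatrixOrder in
lemma norm_le_one_iff_posSemidef (M : Matrix ι ι ℂ) : ‖M‖ ≤ 1 ↔ (1 - Mᴴ * M).PosSemidef := by
  rw [← Matrix.le_iff, ← CStarAlgebra.norm_le_one_iff_of_nonneg _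
    (Matrix.posSemidef_conjTranspose_mul_self M).nonneg, Matrix.l2_opNorm_conjTranspose_mul_self]
  constructor <;> intro h <;> nlinarith [norm_nonneg M]

/-- `(I + Λ) + (I + Λ)ᴴ = I + (I + Λ + Λᴴ)` is positive definite, so `I + Λ` has trivial kernel. -/
lemma isUnit_one_add_of_posSemidef {Λ : Matrix ι ι ℂ} (hΛ : (1 + Λ + Λᴴ).PosSemidef) :
    IsUnit (1 + Λ) := by
  have hpd : (1 + Λ + (1 + Λ)ᴴ).PosDef := by
    rw [show 1 + Λ + (1 + Λ)ᴴ = 1 + (1 + Λ + Λᴴ) by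
      rw [Matrix.conjTranspose_add, Matrix.conjTranspose_one]; abel]
    exact Matrix.PosDef.one.add_posSemidef hΛ
  rw [← Matrix.mulVec_injective_iff_isUnit]
  refine (injective_iff_map_eq_zero (Matrix.mulVecLin (1 + Λ))).mpr fun v hv => ?_
  replace hv : (1 + Λ) *ᵥ v = 0 := hv
  by_contra hv0
  have hpos := hpd.dotProduct_mulVec_pos hv0
  rw [Matrix.add_mulVec, dotProduct_add, hv, Matrix.dotProduct_mulVec, ← Matrix.star_mulVec,
    hv] at hpos
  simp at hpos

lemma norm_le_one_of_mul_one_add_eq {M Λ : Matrix ι ι ℂ} (hΛ : (1 + Λ + Λᴴ).PosSemidef)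
    (hM : M * (1 + Λ) = Λ) : ‖M‖ ≤ 1 := by
  set B := (1 + Λ)⁻¹
  have hAB : (1 + Λ) * B = 1 :=
    Matrix.mul_nonsing_inv _ ((Matrix.isUnit_iff_isUnit_det _).mp (isUnit_one_add_of_posSemidef hΛ))
  have hMB : Λ * B = M := by rw [← hM, mul_assoc, hAB, mul_one]
  have hcongr : 1 - Mᴴ * M = Bᴴ * (1 + Λ + Λᴴ) * B := by
    calc 1 - Mᴴ * M = ((1 + Λ) * B)ᴴ * ((1 + Λ) * B) - (Λ * B)ᴴ * (Λ * B) := by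
          rw [hAB, hMB, Matrix.conjTranspose_one, one_mul]
      _ = Bᴴ * (1 + Λ + Λᴴ) * B := by
          simp only [Matrix.conjTranspose_mul, Matrix.conjTranspose_add, Matrix.conjTranspose_one]
          noncomm_ring
  rw [norm_le_one_iff_posSemidef, hcongr]
  exact hΛ.conjTranspose_mul_mul_same B

lemma posSemidef_of_mul_one_sub_eq {M Λ : Matrix ι ι ℂ} (hΛ : ‖Λ‖ ≤ 1) (hU : IsUnit (1 - Λ))
    (hM : M * (1 - Λ) = Λ) : (1 + M + Mᴴ).PosSemidef := by
  set B := (1 - Λ)⁻¹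
  have hAB : (1 - Λ) * B = 1 := Matrix.mul_nonsing_inv _ ((Matrix.isUnit_iff_isUnit_det _).mp hU)
  have hMB : Λ * B = M := by rw [← hM, mul_assoc, hAB, mul_one]
  have hcongr : 1 + M + Mᴴ = Bᴴ * (1 - Λᴴ * Λ) * B := by
    calc 1 + M + Mᴴ = ((1 - Λ) * B)ᴴ * ((1 - Λ) * B) + ((1 - Λ) * B)ᴴ * (Λ * B)
          + (Λ * B)ᴴ * ((1 - Λ) * B) := by
          rw [hAB, hMB, Matrix.conjTranspose_one, one_mul, one_mul, mul_one]
      _ = Bᴴ * (1 - Λᴴ * Λ) * B := by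
          simp only [Matrix.conjTranspose_mul, Matrix.conjTranspose_sub, Matrix.conjTranspose_one]
          noncomm_ring
  rw [hcongr]
  exact ((norm_le_one_iff_posSemidef Λ).mp hΛ).conjTranspose_mul_mul_same B

lemma norm_le_of_mulVec_eq_smul {M : Matrix ι ι ℂ} {u : ι → ℂ} {c : ℂ} (hu : u ≠ 0)
    (h : M *ᵥ u = c • u) : ‖c‖ ≤ ‖M‖ := by
  have hbound := Matrix.l2_opNorm_mulVec M (WithLp.toLp 2 u)
  rw [WithLp.ofLp_toLp, h, map_smul, norm_smul] at hbound
  have hu' : 0 < ‖WithLp.toLp 2 u‖ := by simpa using hu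
  exact le_of_mul_le_mul_right hbound hu'

lemma mulVec_eq_smul_of_mul_one_sub_smul_eq {W Λ : Matrix ι ι ℂ} {u : ι → ℂ} {t : ℂ}
    (ht : t ≠ 1) (hW : W * (1 - t • Λ) = t • Λ) (hu : Λ *ᵥ u = u) :
    W *ᵥ u = (t / (1 - t)) • u := by
  have h1 : (1 - t) • (W *ᵥ u) = t • u := by
    have := congr_arg (· *ᵥ u) hW
    simp only [← Matrix.mulVec_mulVec, Matrix.sub_mulVec, Matrix.one_mulVec, Matrix.smul_mulVec,
      hu, Matrix.mulVec_sub, Matrix.mulVec_smul] at this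
    rw [sub_smul, one_smul, this]
  rw [div_eq_inv_mul, mul_smul, ← h1, smul_smul, inv_mul_cancel₀ (sub_ne_zero.mpr ht.symm),
    one_smul]

end CayleyTransform

section StructureConstants

variable {g d : ℕ}

def HasStructureConstants (A : Fin g → Matrix (Fin d) (Fin d) ℂ)
    (Ξ : Fin g → Matrix (Fin g) (Fin g) ℂ) : Prop :=
  ∀ j k, A k * A j = ∑ s, (Ξ j) k s • A s

lemma lamScalar_eq_linearCombination (A : Fin g → Matrix (Fin d) (Fin d) ℂ) :
    lamScalar A = Fintype.linearCombination ℂ A := by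
  ext1 c
  rw [Fintype.linearCombination_apply, lamScalar]

variable {A : Fin g → Matrix (Fin d) (Fin d) ℂ} {Ξ : Fin g → Matrix (Fin g) (Fin g) ℂ}

lemma HasStructureConstants.mul_eq_lamScalar (hA : HasStructureConstants A Ξ) (j k : Fin g) :
    A k * A j = lamScalar A (Ξ j k) :=
  hA j k

lemma HasStructureConstants.lamScalar_mul (hA : HasStructureConstants A Ξ) (c : Fin g → ℂ)
    (j : Fin g) : lamScalar A c * A j = lamScalar A (c ᵥ* Ξ j) := by
  simp only [lamScalar, Finset.sum_mul, smul_mul_assoc, hA j, Finset.smul_sum, smul_smul,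
    Matrix.vecMul, dotProduct, Finset.sum_smul]
  exact Finset.sum_comm

/-- Associativity of the algebra spanned by `A` forces its structure constants to satisfy the
same relations as `A`. -/
theorem HasStructureConstants.convexotonic (hli : LinearIndependent ℂ A)
    (hA : HasStructureConstants A Ξ) : Convexotonic Ξ := by
  intro j k
  have hinj : Function.Injective (lamScalar A) := by
    rw [lamScalar_eq_linearCombination]
    exact linearIndependent_iff_injective_fintypeLinearCombination.mp hli
  refine funext fun l => hinj ?_
  calc lamScalar A ((Ξ k * Ξ j) l) = lamScalar A (Ξ k l ᵥ* Ξ j) := rfl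
    _ = A l * A k * A j := by rw [← hA.lamScalar_mul, hA.mul_eq_lamScalar]
    _ = A l * (A k * A j) := mul_assoc _ _ _
    _ = ∑ s, Ξ j k s • lamScalar A (Ξ s l) := by
        simp only [hA j k, Finset.mul_sum, mul_smul_comm, hA.mul_eq_lamScalar]
    _ = lamScalar A (∑ s, Ξ j k s • Ξ s l) := by
        simp only [lamScalar_eq_linearCombination, map_sum, map_smul]
    _ = lamScalar A ((∑ s, Ξ j k s • Ξ s) l) := by
        congr 1; ext t; simp [Matrix.sum_apply]

end StructureConstants

section Tuples

variable {g d n : ℕ}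

def lamKₗ (A : Fin g → Matrix (Fin d) (Fin d) ℂ) :
    (Fin g → Matrix (Fin n) (Fin n) ℂ) →ₗ[ℂ] Matrix (Fin d × Fin n) (Fin d × Fin n) ℂ :=
  ∑ j, (Matrix.kroneckerBilinear (R := ℂ) (A j)).comp (LinearMap.proj j)

lemma lamKₗ_apply (A : Fin g → Matrix (Fin d) (Fin d) ℂ) (X : Fin g → Matrix (Fin n) (Fin n) ℂ) :
    lamKₗ A X = lamK A X := by
  rw [lamKₗ, LinearMap.sum_apply]
  rfl

lemma lamK_zero (A : Fin g → Matrix (Fin d) (Fin d) ℂ) : lamK (n := n) A 0 = 0 := by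
  simp only [← lamKₗ_apply, map_zero]

lemma lamK_add (A : Fin g → Matrix (Fin d) (Fin d) ℂ) (X Y : Fin g → Matrix (Fin n) (Fin n) ℂ) :
    lamK A (X + Y) = lamK A X + lamK A Y := by
  simp only [← lamKₗ_apply, map_add]

lemma lamK_neg (A : Fin g → Matrix (Fin d) (Fin d) ℂ) (X : Fin g → Matrix (Fin n) (Fin n) ℂ) :
    lamK A (-X) = -lamK A X := by
  simp only [← lamKₗ_apply, map_neg]

lemma lamK_smul (A : Fin g → Matrix (Fin d) (Fin d) ℂ) (c : ℂ)
    (X : Fin g → Matrix (Fin n) (Fin n) ℂ) : lamK A (c • X) = c • lamK A X := by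
  simp only [← lamKₗ_apply, map_smul]

lemma lamK_injective {A : Fin g → Matrix (Fin d) (Fin d) ℂ} (hli : LinearIndependent ℂ A) :
    Function.Injective (lamK (n := n) A) := by
  rw [← funext (lamKₗ_apply A)]
  refine (injective_iff_map_eq_zero _).mpr fun X hX => funext fun j => ?_
  ext a b
  have hcomb : ∑ i, X i a b • A i = 0 := by
    ext c e
    simpa [lamKₗ_apply, lamK, Matrix.sum_apply, mul_comm] using
      congr_fun (congr_fun hX (c, a)) (e, b)
  exact Fintype.linearIndependent_iff.mp hli _ hcomb j

/-- A tuple is identified with the `n × gn` block row `[X₁ ⋯ X_g]`. -/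
def toRow : (Fin g → Matrix (Fin n) (Fin n) ℂ) ≃ₗ[ℂ] Matrix (Fin n) (Fin g × Fin n) ℂ where
  toFun X := Matrix.of fun a jb => X jb.1 a jb.2
  invFun R j := Matrix.of fun a b => R a (j, b)
  map_add' _ _ := rfl
  map_smul' _ _ := rfl
  left_inv _ := rfl
  right_inv _ := rfl

lemma toRow_apply (X : Fin g → Matrix (Fin n) (Fin n) ℂ) (a : Fin n) (j : Fin g) (b : Fin n) :
    toRow X a (j, b) = X j a b :=
  rfl

def rowMul (X : Fin g → Matrix (Fin n) (Fin n) ℂ)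
    (M : Matrix (Fin g × Fin n) (Fin g × Fin n) ℂ) : Fin g → Matrix (Fin n) (Fin n) ℂ :=
  fun i => ∑ j, X j * blk M j i

lemma toRow_rowMul (X : Fin g → Matrix (Fin n) (Fin n) ℂ)
    (M : Matrix (Fin g × Fin n) (Fin g × Fin n) ℂ) : toRow (rowMul X M) = toRow X * M := by
  ext a ⟨i, b⟩
  simp [toRow_apply, rowMul, blk, Matrix.mul_apply, Matrix.sum_apply, Fintype.sum_prod_type]

lemma rowMul_eq_iff {X Y : Fin g → Matrix (Fin n) (Fin n) ℂ}
    {M : Matrix (Fin g × Fin n) (Fin g × Fin n) ℂ} : rowMul X M = Y ↔ toRow X * M = toRow Y := by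
  rw [← toRow_rowMul, toRow.injective.eq_iff]

lemma rowMul_one (X : Fin g → Matrix (Fin n) (Fin n) ℂ) : rowMul X 1 = X := by
  rw [rowMul_eq_iff, Matrix.mul_one]

lemma rowMul_mul (X : Fin g → Matrix (Fin n) (Fin n) ℂ)
    (M N : Matrix (Fin g × Fin n) (Fin g × Fin n) ℂ) :
    rowMul X (M * N) = rowMul (rowMul X M) N := by
  rw [rowMul_eq_iff, toRow_rowMul, toRow_rowMul, Matrix.mul_assoc]

lemma rowMul_add (X : Fin g → Matrix (Fin n) (Fin n) ℂ)
    (M N : Matrix (Fin g × Fin n) (Fin g × Fin n) ℂ) :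
    rowMul X (M + N) = rowMul X M + rowMul X N := by
  rw [rowMul_eq_iff, map_add, toRow_rowMul, toRow_rowMul, Matrix.mul_add]

lemma rowMul_one_add (X : Fin g → Matrix (Fin n) (Fin n) ℂ)
    (M : Matrix (Fin g × Fin n) (Fin g × Fin n) ℂ) : rowMul X (1 + M) = X + rowMul X M := by
  rw [rowMul_add, rowMul_one]

lemma rowMul_neg (X : Fin g → Matrix (Fin n) (Fin n) ℂ)
    (M : Matrix (Fin g × Fin n) (Fin g × Fin n) ℂ) : rowMul (-X) M = -rowMul X M := by
  rw [rowMul_eq_iff, map_neg, map_neg, toRow_rowMul, Matrix.neg_mul]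

lemma rowMul_inv_mul_cancel (X : Fin g → Matrix (Fin n) (Fin n) ℂ)
    {M : Matrix (Fin g × Fin n) (Fin g × Fin n) ℂ} (hM : IsUnit M) :
    rowMul (rowMul X M⁻¹) M = X := by
  rw [← rowMul_mul, Matrix.nonsing_inv_mul _ ((Matrix.isUnit_iff_isUnit_det _).mp hM), rowMul_one]

lemma isUnit_of_rowMul_eq_zero {M : Matrix (Fin g × Fin n) (Fin g × Fin n) ℂ}
    (hM : ∀ V, rowMul V M = 0 → V = 0) : IsUnit M := by
  refine Matrix.vecMul_injective_iff_isUnit.mp ((injective_iff_map_eq_zero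
    (Matrix.vecMulLinear M)).mpr fun v hv => ?_)
  set V := toRow.symm (Matrix.replicateRow (Fin n) v)
  have hV : V = 0 := hM V (by
    rw [rowMul_eq_iff, toRow.apply_symm_apply, ← Matrix.replicateRow_vecMul,
      show v ᵥ* M = 0 from hv, map_zero]
    rfl)
  ext ⟨j, b⟩
  exact congr_fun (congr_fun (congr_fun hV j) b) b

lemma qmap_eq_rowMul (Ξ : Fin g → Matrix (Fin g) (Fin g) ℂ)
    (X : Fin g → Matrix (Fin n) (Fin n) ℂ) : qmap Ξ X = rowMul X (1 + lamK Ξ X)⁻¹ := rfl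

lemma pmap_eq_neg_qmap_neg (Ξ : Fin g → Matrix (Fin g) (Fin g) ℂ)
    (X : Fin g → Matrix (Fin n) (Fin n) ℂ) : pmap Ξ X = -qmap Ξ (-X) := by
  rw [qmap_eq_rowMul, rowMul_neg, neg_neg, lamK_neg, ← sub_eq_add_neg]
  rfl

lemma qmap_eq_neg_pmap_neg (Ξ : Fin g → Matrix (Fin g) (Fin g) ℂ)
    (X : Fin g → Matrix (Fin n) (Fin n) ℂ) : qmap Ξ X = -pmap Ξ (-X) := by
  rw [pmap_eq_neg_qmap_neg, neg_neg, neg_neg]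

end Tuples

section Convexotonic

variable {g d n : ℕ} {A : Fin g → Matrix (Fin d) (Fin d) ℂ}
  {Ξ : Fin g → Matrix (Fin g) (Fin g) ℂ}

lemma rowMul_lamK (X Y : Fin g → Matrix (Fin n) (Fin n) ℂ) :
    rowMul X (lamK Ξ Y) = fun i => ∑ k, ∑ j, Ξ j k i • (X k * Y j) := by
  refine funext fun i => Finset.sum_congr rfl fun k _ => ?_
  have hblk : blk (lamK Ξ Y) k i = ∑ j, Ξ j k i • Y j := by
    ext a b
    simp [blk, lamK, Matrix.sum_apply]
  simp only [hblk, Finset.mul_sum, Matrix.mul_smul]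

lemma HasStructureConstants.lamK_mul_lamK (hA : HasStructureConstants A Ξ)
    (X Y : Fin g → Matrix (Fin n) (Fin n) ℂ) :
    lamK A X * lamK A Y = lamK A (rowMul X (lamK Ξ Y)) := by
  let K := Matrix.kroneckerBilinear (R := ℂ) (α := ℂ) (l := Fin d) (m := Fin d)
    (n := Fin n) (p := Fin n)
  calc lamK A X * lamK A Y = ∑ k, ∑ j, K (A k * A j) (X k * Y j) := by
        simp only [lamK, Finset.sum_mul_sum, ← Matrix.mul_kronecker_mul]
        rfl
    _ = ∑ k, ∑ j, ∑ i, K (A i) (Ξ j k i • (X k * Y j)) := by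
        refine Finset.sum_congr rfl fun k _ => Finset.sum_congr rfl fun j _ => ?_
        simp only [hA j k, map_sum, LinearMap.sum_apply, map_smul, LinearMap.smul_apply]
    _ = ∑ i, K (A i) (∑ k, ∑ j, Ξ j k i • (X k * Y j)) := by
        simp only [map_sum]
        conv_rhs => rw [Finset.sum_comm]
        exact Finset.sum_congr rfl fun k _ => Finset.sum_comm
    _ = lamK A (rowMul X (lamK Ξ Y)) := by
        rw [rowMul_lamK]
        rfl

variable {X Y : Fin g → Matrix (Fin n) (Fin n) ℂ}

/-- `q = X (I + Λ_Ξ(X))⁻¹` solves `q + q Λ_Ξ(X) = X`, and `Λ_A` turns this into a matrix identity. -/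
lemma HasStructureConstants.lamK_qmap_mul (hA : HasStructureConstants A Ξ)
    (hX : IsUnit (1 + lamK Ξ X)) : lamK A (qmap Ξ X) * (1 + lamK A X) = lamK A X := by
  have hsolve : qmap Ξ X + rowMul (qmap Ξ X) (lamK Ξ X) = X := by
    rw [← rowMul_one_add, qmap_eq_rowMul, rowMul_inv_mul_cancel X hX]
  conv_rhs => rw [← hsolve]
  rw [lamK_add, ← hA.lamK_mul_lamK, mul_add, mul_one]

lemma HasStructureConstants.lamK_pmap_mul (hA : HasStructureConstants A Ξ)
    (hY : IsUnit (1 - lamK Ξ Y)) : lamK A (pmap Ξ Y) * (1 - lamK A Y) = lamK A Y := by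
  have h := hA.lamK_qmap_mul (X := -Y) (by rwa [lamK_neg, ← sub_eq_add_neg])
  rw [lamK_neg, ← sub_eq_add_neg] at h
  rw [pmap_eq_neg_qmap_neg, lamK_neg, neg_mul, h, neg_neg]

lemma pmap_qmap (hΞ : Convexotonic Ξ) (hX : IsUnit (1 + lamK Ξ X)) :
    pmap Ξ (qmap Ξ X) = X := by
  have hinv : (1 - lamK Ξ (qmap Ξ X))⁻¹ = 1 + lamK Ξ X := by
    refine Matrix.inv_eq_right_inv ?_
    rw [sub_mul, one_mul, HasStructureConstants.lamK_qmap_mul hΞ hX, add_sub_cancel_right]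
  change rowMul (qmap Ξ X) (1 - lamK Ξ (qmap Ξ X))⁻¹ = X
  rw [hinv, qmap_eq_rowMul, rowMul_inv_mul_cancel X hX]

lemma qmap_pmap (hΞ : Convexotonic Ξ) (hY : IsUnit (1 - lamK Ξ Y)) :
    qmap Ξ (pmap Ξ Y) = Y := by
  have hneg : IsUnit (1 + lamK Ξ (-Y)) := by rwa [lamK_neg, ← sub_eq_add_neg]
  rw [qmap_eq_neg_pmap_neg, pmap_eq_neg_qmap_neg Ξ Y, neg_neg, pmap_qmap hΞ hneg, neg_neg]

/-- A left null vector of `I + Λ_Ξ(X)` would give a tuple `V` with `Λ_J(V) (I + Λ_J(X)) = 0`. -/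
lemma HasStructureConstants.isUnit_one_add_lamK (hli : LinearIndependent ℂ A)
    (hA : HasStructureConstants A Ξ) (hX : IsUnit (1 + lamK A X)) : IsUnit (1 + lamK Ξ X) := by
  refine isUnit_of_rowMul_eq_zero fun V hV => lamK_injective hli ?_
  rw [lamK_zero, ← hX.mul_left_eq_zero, mul_add, mul_one, hA.lamK_mul_lamK, ← lamK_add,
    ← rowMul_one_add, hV, lamK_zero]

lemma HasStructureConstants.isUnit_one_sub_lamK (hli : LinearIndependent ℂ A)
    (hA : HasStructureConstants A Ξ) (hY : IsUnit (1 - lamK A Y)) : IsUnit (1 - lamK Ξ Y) := by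
  have h := hA.isUnit_one_add_lamK hli (X := -Y) (by rwa [lamK_neg, ← sub_eq_add_neg])
  rwa [lamK_neg, ← sub_eq_add_neg] at h

end Convexotonic

/-- If `I - Λ_J(Y)` is singular, with `Λ_J(Y) u = u`, then `Λ_J(p(tY)) u = t/(1-t) u` for `t < 1`,
so the points `p(tY)` of `D_J` are unbounded as `t → 1`. -/
theorem HasStructureConstants.isUnit_one_sub_lamK_of_isBounded {g d n : ℕ}
    {J : Fin g → Matrix (Fin d) (Fin d) ℂ} {Ξ : Fin g → Matrix (Fin g) (Fin g) ℂ}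
    (hli : LinearIndependent ℂ J) (hJ : HasStructureConstants J Ξ)
    (hbdd : Bornology.IsBounded {X : Fin g → Matrix (Fin n) (Fin n) ℂ | (Lpen J X).PosSemidef})
    {Y : Fin g → Matrix (Fin n) (Fin n) ℂ} (hY : ‖lamK J Y‖ ≤ 1) : IsUnit (1 - lamK J Y) := by
  obtain ⟨K, hK⟩ := ((lamKₗ J).toContinuousLinearMap.lipschitz.isBounded_image hbdd).exists_norm_le
  by_contra hsing
  obtain ⟨u, hu0, hu⟩ : ∃ u ≠ 0, lamK J Y *ᵥ u = u := by
    rw [Matrix.isUnit_iff_isUnit_det, isUnit_iff_ne_zero, not_not] at hsing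
    obtain ⟨u, hu0, hu⟩ := Matrix.exists_mulVec_eq_zero_iff.mpr hsing
    exact ⟨u, hu0, by rwa [Matrix.sub_mulVec, Matrix.one_mulVec, sub_eq_zero, eq_comm] at hu⟩
  set c : ℝ := max K 0 + 1
  have hc : 0 < c := by positivity
  set t : ℝ := c / (c + 1)
  have ht0 : 0 ≤ t := by positivity
  have ht1 : t < 1 := (div_lt_one (by linarith)).mpr (by linarith)
  have htc : (t : ℂ) / (1 - t) = c := by
    have : (c : ℂ) + 1 ≠ 0 := by exact_mod_cast (by linarith : c + 1 ≠ 0)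
    push_cast [t]
    field_simp
    ring
  have hnorm : ‖lamK J ((t : ℂ) • Y)‖ < 1 := by
    rw [lamK_smul, norm_smul, Complex.norm_real, Real.norm_of_nonneg ht0]
    nlinarith [norm_nonneg (lamK J Y)]
  have hU : IsUnit (1 - lamK J ((t : ℂ) • Y)) := (Units.oneSub _ hnorm).isUnit
  have hW := hJ.lamK_pmap_mul (hJ.isUnit_one_sub_lamK hli hU)
  have hpsd := posSemidef_of_mul_one_sub_eq hnorm.le hU hW
  rw [lamK_smul] at hW
  have heig := mulVec_eq_smul_of_mul_one_sub_smul_eq (by exact_mod_cast ht1.ne) hW hu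
  have hle := norm_le_of_mulVec_eq_smul hu0 heig
  rw [htc, Complex.norm_real, Real.norm_of_nonneg hc.le] at hle
  have hWK := hK _ ⟨_, hpsd, rfl⟩
  rw [LinearMap.coe_toContinuousLinearMap', lamKₗ_apply] at hWK
  linarith [le_max_left K 0]

theorem qmap_bijection_spectrahedron_spectraball_general {g d : ℕ}
    (J : Fin g → Matrix (Fin d) (Fin d) ℂ)
    (Ξ : Fin g → Matrix (Fin g) (Fin g) ℂ)
    (hli : LinearIndependent ℂ J)
    (hΞ : ∀ k j, J k * J j = ∑ s, (Ξ j) k s • J s)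
    (hbdd : ∀ n : ℕ,
      Bornology.IsBounded {X : Fin g → Matrix (Fin n) (Fin n) ℂ | (Lpen J X).PosSemidef}) :
    ∀ n : ℕ,
      (∀ X : Fin g → Matrix (Fin n) (Fin n) ℂ, (Lpen J X).PosSemidef →
        IsUnit (1 + lamK Ξ X) ∧ ‖lamK J (qmap Ξ X)‖ ≤ 1 ∧ pmap Ξ (qmap Ξ X) = X) ∧
      (∀ Y : Fin g → Matrix (Fin n) (Fin n) ℂ, ‖lamK J Y‖ ≤ 1 →
        IsUnit (1 - lamK Ξ Y) ∧ (Lpen J (pmap Ξ Y)).PosSemidef ∧ qmap Ξ (pmap Ξ Y) = Y) ∧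
      Set.BijOn (qmap Ξ) {X : Fin g → Matrix (Fin n) (Fin n) ℂ | (Lpen J X).PosSemidef}
        {Y : Fin g → Matrix (Fin n) (Fin n) ℂ | ‖lamK J Y‖ ≤ 1} := by
  intro n
  have hJ : HasStructureConstants J Ξ := fun j k => hΞ k j
  have hconv := hJ.convexotonic hli
  have forward (X : Fin g → Matrix (Fin n) (Fin n) ℂ) (hX : (Lpen J X).PosSemidef) :
      IsUnit (1 + lamK Ξ X) ∧ ‖lamK J (qmap Ξ X)‖ ≤ 1 ∧ pmap Ξ (qmap Ξ X) = X := by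
    have hU := hJ.isUnit_one_add_lamK hli (isUnit_one_add_of_posSemidef hX)
    exact ⟨hU, norm_le_one_of_mul_one_add_eq hX (hJ.lamK_qmap_mul hU), pmap_qmap hconv hU⟩
  have backward (Y : Fin g → Matrix (Fin n) (Fin n) ℂ) (hY : ‖lamK J Y‖ ≤ 1) :
      IsUnit (1 - lamK Ξ Y) ∧ (Lpen J (pmap Ξ Y)).PosSemidef ∧ qmap Ξ (pmap Ξ Y) = Y := by
    have hUJ := hJ.isUnit_one_sub_lamK_of_isBounded hli (hbdd n) hY
    have hU := hJ.isUnit_one_sub_lamK hli hUJ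
    exact ⟨hU, posSemidef_of_mul_one_sub_eq hY hUJ (hJ.lamK_pmap_mul hU), qmap_pmap hconv hU⟩
  refine ⟨forward, backward, Set.InvOn.bijOn ?_ (fun X hX => (forward X hX).2.1)
    (fun Y hY => (backward Y hY).2.1)⟩
  exact ⟨fun X hX => (forward X hX).2.2, fun Y hY => (backward Y hY).2.2⟩

/-- if `J` is linearly independent, its span is closed under
multiplication, `J_k J_j = Σ_s (Ξ_j)_{k,s} J_s`, and every level `D_J(n)` is
bounded, then `q(X) = X(I+Λ_Ξ(X))⁻¹` is a bijection from `D_J(n)` onto `B_J(n)`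
with inverse `p(Y) = Y(I-Λ_Ξ(Y))⁻¹`. -/
theorem qmap_bijection_spectrahedron_spectraball {g d : ℕ}
    (J : Fin g → Matrix (Fin d) (Fin d) ℂ)
    (Ξ : Fin g → Matrix (Fin g) (Fin g) ℂ)
    (hli : LinearIndependent ℂ J)
    (hmul : ∀ k j, J k * J j ∈ Submodule.span ℂ (Set.range J))
    (hΞ : ∀ k j, J k * J j = ∑ s, (Ξ j) k s • J s)
    (hbdd : ∀ n : ℕ,
      Bornology.IsBounded {X : Fin g → Matrix (Fin n) (Fin n) ℂ | (Lpen J X).PosSemidef}) :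
    ∀ n : ℕ,
      (∀ X : Fin g → Matrix (Fin n) (Fin n) ℂ, (Lpen J X).PosSemidef →
        IsUnit (1 + lamK Ξ X) ∧ ‖lamK J (qmap Ξ X)‖ ≤ 1 ∧ pmap Ξ (qmap Ξ X) = X) ∧
      (∀ Y : Fin g → Matrix (Fin n) (Fin n) ℂ, ‖lamK J Y‖ ≤ 1 →
        IsUnit (1 - lamK Ξ Y) ∧ (Lpen J (pmap Ξ Y)).PosSemidef ∧ qmap Ξ (pmap Ξ Y) = Y) ∧
      Set.BijOn (qmap Ξ) {X : Fin g → Matrix (Fin n) (Fin n) ℂ | (Lpen J X).PosSemidef}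
        {Y : Fin g → Matrix (Fin n) (Fin n) ℂ | ‖lamK J Y‖ ≤ 1} :=
  qmap_bijection_spectrahedron_spectraball_general J Ξ hli hΞ hbdd
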